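/- arXiv:1703.02760 — 2 statements merged into one kernel-verified Lean document; each statement's English description precedes it below -/
import Mathlib

section
/- Under the same ODE system with g concave, increasing, g(0)=0, g(x) ≤ g'(0)x with strict concavity, if a₁₂ g'(0) > a₁₁ a₂₂ and g is bounded, then there exists exactly one z₁* > 0 with a₁₂ g(z₁*) = a₁₁ a₂₂ z₁*, giving a unique nontrivial endemic equilibrium. -/
/-!
Put `c = a₁₁ a₂₂ / a₁₂`, so that the equilibria are the zeros of `f z = g z - c z` on `(0, ∞)`.
Since `c < g'(0)` and `g(0) = 0`, `f` is positive just to the right of `0`; since `g` is bounded,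
`f` is negative for large `z`. Concavity makes `f` continuous on `(0, ∞)`, so a zero exists.
A second zero is impossible: `f` is strictly concave, so between a point where it is positive and
a zero further right it stays strictly positive.
-/

open Set Filter Topology

lemma HasDerivWithinAt.eventually_apply_lt_of_pos {f : ℝ → ℝ} {f' a : ℝ}
    (hf : HasDerivWithinAt f f' (Ici a) a) (hf' : 0 < f') : ∀ᶠ x in 𝓝[>] a, f a < f x := by
  have hslope : Tendsto (slope f a) (𝓝[>] a) (𝓝 f') :=
    (hasDerivWithinAt_iff_tendsto_slope' self_notMem_Ioi).mp hf.Ioi_of_Ici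
  filter_upwards [hslope.eventually (lt_mem_nhds hf'), self_mem_nhdsWithin] with x hpos hx
  rw [slope_def_field] at hpos
  exact sub_pos.mp ((div_pos_iff_of_pos_right (sub_pos.mpr hx)).mp hpos)

lemma StrictConcaveOn.subsingleton_zeros_of_eventually_pos {f : ℝ → ℝ} {a : ℝ}
    (hf : StrictConcaveOn ℝ (Ioi a) f) (hpos : ∀ᶠ x in 𝓝[>] a, 0 < f x) :
    {x | a < x ∧ f x = 0}.Subsingleton := by
  suffices ∀ x y, a < x → x < y → f x = 0 → f y = 0 → False by
    rintro x ⟨hx, hfx⟩ y ⟨hy, hfy⟩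
    by_contra hne
    rcases lt_or_gt_of_ne hne with hxy | hyx
    exacts [this x y hx hxy hfx hfy, this y x hy hyx hfy hfx]
  intro x y hx hxy hfx hfy
  obtain ⟨b, hfb, hb⟩ := (hpos.and (Ioo_mem_nhdsGT hx)).exists
  have hmin := hf.lt_on_openSegment hb.1 (hb.1.trans (hb.2.trans hxy)) (hb.2.trans hxy).ne
    (Ioo_subset_openSegment ⟨hb.2, hxy⟩)
  rw [hfx, hfy, min_eq_right hfb.le] at hmin
  exact hmin.false

lemma ConcaveOn.exists_zero_of_eventually_pos_of_eventually_neg {f : ℝ → ℝ} {a : ℝ}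
    (hf : ConcaveOn ℝ (Ioi a) f) (hpos : ∀ᶠ x in 𝓝[>] a, 0 < f x)
    (hneg : ∀ᶠ x in atTop, f x < 0) : ∃ x, a < x ∧ f x = 0 := by
  obtain ⟨b, hfb, hb⟩ := (hpos.and self_mem_nhdsWithin).exists
  obtain ⟨c, hfc, hc⟩ := (hneg.and (eventually_gt_atTop a)).exists
  exact isPreconnected_Ioi.intermediate_value hc hb (hf.continuousOn isOpen_Ioi) ⟨hfc.le, hfb.le⟩

lemma StrictConcaveOn.existsUnique_zero_of_eventually_pos_of_eventually_neg {f : ℝ → ℝ} {a : ℝ}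
    (hf : StrictConcaveOn ℝ (Ioi a) f) (hpos : ∀ᶠ x in 𝓝[>] a, 0 < f x)
    (hneg : ∀ᶠ x in atTop, f x < 0) : ∃! x, a < x ∧ f x = 0 := by
  obtain ⟨x, hx⟩ := hf.concaveOn.exists_zero_of_eventually_pos_of_eventually_neg hpos hneg
  exact ⟨x, hx, fun y hy => hf.subsingleton_zeros_of_eventually_pos hpos hy hx⟩

theorem stmt_4_general (a11 a12 a22 : ℝ) (ha11 : 0 < a11) (ha12 : 0 < a12) (ha22 : 0 < a22)
    (g : ℝ → ℝ) (g'0 : ℝ)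
    (hg0 : g 0 = 0)
    (hconc : StrictConcaveOn ℝ (Set.Ioi 0) g)
    (hderiv : HasDerivWithinAt g g'0 (Set.Ici 0) 0)
    (hbdd : ∃ B, ∀ x ≥ (0:ℝ), g x ≤ B)
    (hthr : a11 * a22 < a12 * g'0) :
    ∃! z₁ : ℝ, 0 < z₁ ∧ a12 * g z₁ = a11 * a22 * z₁ := by
  set c := a11 * a22 / a12
  have hc : 0 < c := by positivity
  have hcg : c < g'0 := by rwa [div_lt_iff₀' ha12]
  have hequil (z : ℝ) : a12 * g z = a11 * a22 * z ↔ g z - c * z = 0 := by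
    rw [sub_eq_zero, div_mul_eq_mul_div, eq_div_iff ha12.ne', mul_comm (g z)]
  simp_rw [hequil]
  apply StrictConcaveOn.existsUnique_zero_of_eventually_pos_of_eventually_neg
  · exact hconc.sub_convexOn ((convexOn_id (convex_Ioi 0)).smul hc.le)
  · have hf := hderiv.sub (((hasDerivAt_id 0).const_mul c).hasDerivWithinAt (s := Ici 0))
    simpa [hg0] using hf.eventually_apply_lt_of_pos (by linarith)
  · obtain ⟨B, hB⟩ := hbdd
    filter_upwards [eventually_gt_atTop (max (B / c) 0)] with x hx
    have hBx : B < c * x := (div_lt_iff₀' hc).mp ((le_max_left _ _).trans_lt hx)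
    linarith [hB x ((le_max_right _ _).trans hx.le)]

theorem stmt_4 (a11 a12 a22 : ℝ) (ha11 : 0 < a11) (ha12 : 0 < a12) (ha22 : 0 < a22)
    (g : ℝ → ℝ) (g'0 : ℝ)
    (hg0 : g 0 = 0)
    (hgpos : ∀ x ≥ (0:ℝ), 0 ≤ g x)
    (hcont : ContinuousOn g (Set.Ici 0))
    (hconc : StrictConcaveOn ℝ (Set.Ioi 0) g)
    (hmono : MonotoneOn g (Set.Ici 0))
    (hderiv : HasDerivWithinAt g g'0 (Set.Ici 0) 0)
    (hg'pos : 0 < g'0)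
    (hdom : ∀ x > (0:ℝ), g x < g'0 * x)
    (hbdd : ∃ B, ∀ x ≥ (0:ℝ), g x ≤ B)
    (hthr : a11 * a22 < a12 * g'0) :
    ∃! z₁ : ℝ, 0 < z₁ ∧ a12 * g z₁ = a11 * a22 * z₁ :=
  stmt_4_general a11 a12 a22 ha11 ha12 ha22 g g'0 hg0 hconc hderiv hbdd hthr
end

section
/- In the simplified Ross–Macdonald ODE system X' = -rX + (ab/H)(H - X)Y, Y' = -μY + (ac/H)X(M - Y) with all parameters positive, define R₀² = (a²bcM)/(r μ H). If R₀ ≤ 1 then (0,0) is the only equilibrium in [0,H] × [0,M]; if R₀ > 1 then there exists a unique endemic equilibrium (X*, Y*) with 0 < X* < H and 0 < Y* < M. -/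
/-!
Clearing the denominators, the mosquito equation reads `Y (μH + acX) = acXM`, so `Y` is
determined by `X`. Substituting this into the human equation and cancelling the factor `X`
leaves a *linear* equation for `X`,
`X (racH + a²bcM) = H (a²bcM - rμH)`,
whose right-hand side has the sign of `R₀² - 1`. Hence a positive root `X*` exists iff
`R₀ > 1`, and then it lies below `H`; the corresponding `Y*` lies strictly between `0` and `M`.
-/

namespace RossMacdonald

variable (a b c r μ H M : ℝ)

def IsEquilibrium (X Y : ℝ) : Prop :=
  r * X = (a * b / H) * (H - X) * Y ∧ μ * Y = (a * c / H) * X * (M - Y)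

noncomputable def nullclineY (X : ℝ) : ℝ :=
  a * c * X * M / (μ * H + a * c * X)

noncomputable def reproductionNumber : ℝ :=
  Real.sqrt (a ^ 2 * b * c * M / (r * μ * H))

noncomputable def endemicX : ℝ :=
  H * (a ^ 2 * b * c * M - r * μ * H) / (r * a * c * H + a ^ 2 * b * c * M)

variable {a b c r μ H M}

theorem isEquilibrium_zero_left_iff (hμ : μ ≠ 0) {Y : ℝ} :
    IsEquilibrium a b c r μ H M 0 Y ↔ Y = 0 := by
  constructor
  · rintro ⟨-, h⟩
    simpa [hμ] using h
  · rintro rfl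
    simp [IsEquilibrium]

theorem isEquilibrium_iff (ha : 0 < a) (hb : 0 < b) (hc : 0 < c) (hr : 0 < r) (hμ : 0 < μ)
    (hH : 0 < H) (hM : 0 < M) {X Y : ℝ} (hX : 0 < X) :
    IsEquilibrium a b c r μ H M X Y ↔
      X = endemicX a b c r μ H M ∧ Y = nullclineY a c μ H M X := by
  have hE : μ * H + a * c * X ≠ 0 := by positivity
  have hD : r * a * c * H + a ^ 2 * b * c * M ≠ 0 := by positivity
  have mosquito : μ * Y = (a * c / H) * X * (M - Y) ↔ Y = nullclineY a c μ H M X := by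
    rw [nullclineY, eq_div_iff hE]
    field_simp
    constructor <;> intro h <;> linear_combination h
  unfold IsEquilibrium
  rw [and_comm, mosquito, and_comm]
  refine and_congr_left fun hY => ?_
  rw [endemicX, eq_div_iff hD, hY, nullclineY]
  field_simp
  constructor <;> intro h <;> linear_combination h

theorem reproductionNumber_le_one_iff (hr : 0 < r) (hμ : 0 < μ) (hH : 0 < H) :
    reproductionNumber a b c r μ H M ≤ 1 ↔ a ^ 2 * b * c * M ≤ r * μ * H := by
  rw [reproductionNumber, Real.sqrt_le_one, div_le_one (by positivity)]

theorem one_lt_reproductionNumber_iff (hr : 0 < r) (hμ : 0 < μ) (hH : 0 < H) :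
    1 < reproductionNumber a b c r μ H M ↔ r * μ * H < a ^ 2 * b * c * M := by
  rw [← not_le, reproductionNumber_le_one_iff hr hμ hH, not_le]

theorem endemicX_pos (ha : 0 < a) (hb : 0 < b) (hc : 0 < c) (hr : 0 < r) (hH : 0 < H)
    (hM : 0 < M) (hR : r * μ * H < a ^ 2 * b * c * M) : 0 < endemicX a b c r μ H M :=
  div_pos (mul_pos hH (sub_pos.mpr hR)) (by positivity)

theorem endemicX_lt (ha : 0 < a) (hb : 0 < b) (hc : 0 < c) (hr : 0 < r) (hμ : 0 < μ)
    (hH : 0 < H) (hM : 0 < M) : endemicX a b c r μ H M < H := by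
  rw [endemicX, div_lt_iff₀ (by positivity), mul_lt_mul_iff_right₀ hH]
  nlinarith [mul_pos (mul_pos (mul_pos hr ha) hc) hH, mul_pos (mul_pos hr hμ) hH]

theorem nullclineY_pos (ha : 0 < a) (hc : 0 < c) (hμ : 0 < μ) (hH : 0 < H) (hM : 0 < M)
    {X : ℝ} (hX : 0 < X) : 0 < nullclineY a c μ H M X := by
  unfold nullclineY
  positivity

theorem nullclineY_lt (ha : 0 < a) (hc : 0 < c) (hμ : 0 < μ) (hH : 0 < H) (hM : 0 < M)
    {X : ℝ} (hX : 0 < X) : nullclineY a c μ H M X < M := by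
  rw [nullclineY, div_lt_iff₀ (by positivity)]
  nlinarith [mul_pos hM (mul_pos hμ hH)]

theorem endemicX_nonpos (ha : 0 < a) (hb : 0 < b) (hc : 0 < c) (hr : 0 < r) (hH : 0 < H)
    (hM : 0 < M) (hR : a ^ 2 * b * c * M ≤ r * μ * H) : endemicX a b c r μ H M ≤ 0 :=
  div_nonpos_of_nonpos_of_nonneg (mul_nonpos_of_nonneg_of_nonpos hH.le (sub_nonpos.mpr hR))
    (by positivity)

theorem eq_zero_of_isEquilibrium (ha : 0 < a) (hb : 0 < b) (hc : 0 < c) (hr : 0 < r)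
    (hμ : 0 < μ) (hH : 0 < H) (hM : 0 < M) (hR : a ^ 2 * b * c * M ≤ r * μ * H) {X Y : ℝ}
    (hX : 0 ≤ X) (h : IsEquilibrium a b c r μ H M X Y) : X = 0 ∧ Y = 0 := by
  obtain rfl | hX := hX.eq_or_lt
  · exact ⟨rfl, (isEquilibrium_zero_left_iff hμ.ne').mp h⟩
  · have hXeq := ((isEquilibrium_iff ha hb hc hr hμ hH hM hX).mp h).1
    linarith [endemicX_nonpos ha hb hc hr hH hM hR]

end RossMacdonald

open RossMacdonald in
theorem stmt_18 (a b c r μ H M : ℝ)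
    (ha : 0 < a) (hb : 0 < b) (hc : 0 < c) (hr : 0 < r) (hμ : 0 < μ)
    (hH : 0 < H) (hM : 0 < M)
    (R0 : ℝ) (hR0 : R0 = Real.sqrt (a ^ 2 * b * c * M / (r * μ * H))) :
    (R0 ≤ 1 → ∀ X Y : ℝ, 0 ≤ X → X ≤ H → 0 ≤ Y → Y ≤ M →
      r * X = (a * b / H) * (H - X) * Y → μ * Y = (a * c / H) * X * (M - Y) →
      X = 0 ∧ Y = 0) ∧
    (1 < R0 → ∃! p : ℝ × ℝ,
      (0 < p.1 ∧ p.1 < H ∧ 0 < p.2 ∧ p.2 < M) ∧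
      r * p.1 = (a * b / H) * (H - p.1) * p.2 ∧
      μ * p.2 = (a * c / H) * p.1 * (M - p.2)) := by
  subst hR0
  refine ⟨fun hR X Y hX _ _ _ e₁ e₂ => ?_, fun hR => ?_⟩
  · exact eq_zero_of_isEquilibrium ha hb hc hr hμ hH hM
      ((reproductionNumber_le_one_iff hr hμ hH).mp hR) hX ⟨e₁, e₂⟩
  · replace hR := (one_lt_reproductionNumber_iff hr hμ hH).mp hR
    have hX := endemicX_pos ha hb hc hr hH hM hR
    refine ⟨(endemicX a b c r μ H M, nullclineY a c μ H M (endemicX a b c r μ H M)),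
      ⟨⟨hX, endemicX_lt ha hb hc hr hμ hH hM, nullclineY_pos ha hc hμ hH hM hX,
        nullclineY_lt ha hc hμ hH hM hX⟩,
        (isEquilibrium_iff ha hb hc hr hμ hH hM hX).mpr ⟨rfl, rfl⟩⟩, ?_⟩
    rintro p ⟨⟨hp, -, -, -⟩, h⟩
    obtain ⟨hp₁, hp₂⟩ := (isEquilibrium_iff ha hb hc hr hμ hH hM hp).mp h
    exact Prod.ext hp₁ (hp₂.trans (congrArg _ hp₁))
end
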